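/- Let 𝒢 = (G, S, μ, l) be a reconciled gene tree that is least duplication-resolved, and let u, v ∈ V(G) with v a strict descendant of u (v ≺_G u). Then μ(u) ≠ μ(v) or l(u) ≠ l(v). -/

import Mathlib

open SimpleGraph

attribute [local instance] Classical.propDecidable

/-- A rooted tree: a finite connected acyclic graph with a distinguished root. -/
structure RTree (V : Type*) [Fintype V] where
  adj : SimpleGraph V
  isTree : adj.IsTree
  root : V

variable {V : Type*} [Fintype V]

/-- `Anc T a b` : `a` is an ancestor of `b` (i.e. `b ⪯ a`), expressed as:
`a` lies on the (unique) path from the root to `b`. -/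
def Anc (T : RTree V) (a b : V) : Prop :=
  T.adj.dist T.root b = T.adj.dist T.root a + T.adj.dist a b

/-- `IsChild T c p` : `c` is a child of `p`. -/
def IsChild (T : RTree V) (c p : V) : Prop :=
  T.adj.Adj c p ∧ Anc T p c

/-- The set of children of `v`. -/
def childSet (T : RTree V) (v : V) : Set V := {c | IsChild T c v}

/-- A leaf is a node with no children. -/
def IsLeaf (T : RTree V) (v : V) : Prop := ∀ c, ¬ IsChild T c v

/-- The clade of `v`: the set of leaves descending from `v`. -/
def clade (T : RTree V) (v : V) : Set V := {x | IsLeaf T x ∧ Anc T v x}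

/-- `w` is the lowest common ancestor of the set `X` in `T`. -/
def IsLCA (T : RTree V) (X : Set V) (w : V) : Prop :=
  (∀ x ∈ X, Anc T w x) ∧ ∀ w', (∀ x ∈ X, Anc T w' x) → Anc T w' w

/-- A species tree is a rooted binary tree: every internal node has exactly two children. -/
def IsSpeciesTree (S : RTree V) : Prop :=
  ∀ v, ¬ IsLeaf S v → (childSet S v).ncard = 2

/-- Number of leaves of a rooted tree. -/
noncomputable def numLeaves (T : RTree V) : ℕ := {v | IsLeaf T v}.ncard

/-- `Hsum S` = `H(S)`: the sum of root-to-internal-node distances in `S`. -/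
noncomputable def Hsum (S : RTree V) : ℕ :=
  ∑ v : V, if IsLeaf S v then 0 else S.adj.dist S.root v

inductive Evt | dup | spec | extant
deriving DecidableEq

/-- A reconciled gene tree with species tree `S`, whose leaves are labeled bijectively by
the set of genes `Γ`. -/
structure Recon (Γ : Type*) (VG : Type*) (VS : Type*) [Fintype VG] [Fintype VS]
    (S : RTree VS) where
  tree : RTree VG
  geneLeaf : Γ → VG
  geneLeaf_inj : Function.Injective geneLeaf
  geneLeaf_range : ∀ v, IsLeaf tree v ↔ ∃ g, geneLeaf g = v
  μ : VG → VS
  lbl : VG → Evt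
  internal_children : ∀ v, ¬ IsLeaf tree v → 2 ≤ (childSet tree v).ncard
  leaf_species : ∀ v, IsLeaf tree v → IsLeaf S (μ v)
  leaf_lbl : ∀ v, IsLeaf tree v → lbl v = Evt.extant
  internal_lbl : ∀ v, ¬ IsLeaf tree v → lbl v = Evt.dup ∨ lbl v = Evt.spec
  time_consistent : ∀ a b, Anc tree a b → Anc S (μ a) (μ b)
  spec_two_children : ∀ v, lbl v = Evt.spec →
    ¬ IsLeaf S (μ v) ∧ (childSet tree v).ncard = 2
  spec_separates : ∀ v, lbl v = Evt.spec →
    ∀ v₁ v₂, IsChild tree v₁ v → IsChild tree v₂ v → v₁ ≠ v₂ →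
      ∃ s₁ s₂, IsChild S s₁ (μ v) ∧ IsChild S s₂ (μ v) ∧ s₁ ≠ s₂ ∧
        ((Anc S s₁ (μ v₁) ∧ Anc S s₂ (μ v₂)) ∨ (Anc S s₂ (μ v₁) ∧ Anc S s₁ (μ v₂)))

variable {Γ : Type*} {VS VG₁ VG₂ : Type*} [Fintype VS] [Fintype VG₁] [Fintype VG₂]
  {S : RTree VS}

/-- The clade of a gene tree node, as a set of genes. -/
def gclade (𝒢 : Recon Γ VG₁ VS S) (v : VG₁) : Set Γ :=
  {g | Anc 𝒢.tree v (𝒢.geneLeaf g)}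

/-- Two reconciled gene trees (over the same species tree and gene set) are comparable if
corresponding extant genes map to the same species. -/
def Comparable (𝒢₁ : Recon Γ VG₁ VS S) (𝒢₂ : Recon Γ VG₂ VS S) : Prop :=
  ∀ g, 𝒢₁.μ (𝒢₁.geneLeaf g) = 𝒢₂.μ (𝒢₂.geneLeaf g)

/-- `m` is the correspondence map `v ↦ lca_{G₂}(L(G₁(v)))`. -/
def IsLcaMap (𝒢₁ : Recon Γ VG₁ VS S) (𝒢₂ : Recon Γ VG₂ VS S) (m : VG₁ → VG₂) : Prop :=
  ∀ v, IsLCA 𝒢₂.tree (𝒢₂.geneLeaf '' gclade 𝒢₁ v) (m v)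

/-- `μ` is the lca-mapping: every node maps to the lca of the species of its leaf descendants. -/
def UsesLcaMapping (𝒢 : Recon Γ VG₁ VS S) : Prop :=
  ∀ v, IsLCA S (𝒢.μ '' clade 𝒢.tree v) (𝒢.μ v)

/-- The path component `d_path(𝒢₁,𝒢₂)` (with `m` the lca correspondence map). -/
noncomputable def dPath (𝒢₁ : Recon Γ VG₁ VS S) (𝒢₂ : Recon Γ VG₂ VS S)
    (m : VG₁ → VG₂) : ℕ :=
  ∑ v : VG₁, S.adj.dist (𝒢₁.μ v) (𝒢₂.μ (m v))

/-- The label component `d_lbl(𝒢₁,𝒢₂)`. -/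
noncomputable def dLbl (𝒢₁ : Recon Γ VG₁ VS S) (𝒢₂ : Recon Γ VG₂ VS S)
    (m : VG₁ → VG₂) : ℕ :=
  {v : VG₁ | 𝒢₁.lbl v ≠ 𝒢₂.lbl (m v)}.ncard

/-- The asymmetric dissimilarity `d_asym = α·d_path + (1−α)·d_lbl`. -/
noncomputable def dAsym (α : ℝ) (𝒢₁ : Recon Γ VG₁ VS S) (𝒢₂ : Recon Γ VG₂ VS S)
    (m : VG₁ → VG₂) : ℝ :=
  α * (dPath 𝒢₁ 𝒢₂ m : ℝ) + (1 - α) * (dLbl 𝒢₁ 𝒢₂ m : ℝ)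

/-- The Path-Label Reconciliation dissimilarity `PLR(𝒢₁,𝒢₂)`, where `m₁₂`, `m₂₁` are the
lca correspondence maps in the two directions. -/
noncomputable def PLR (α : ℝ) (𝒢₁ : Recon Γ VG₁ VS S) (𝒢₂ : Recon Γ VG₂ VS S)
    (m₁₂ : VG₁ → VG₂) (m₂₁ : VG₂ → VG₁) : ℝ :=
  dAsym α 𝒢₁ 𝒢₂ m₁₂ + dAsym α 𝒢₂ 𝒢₁ m₂₁

/-- An edge `uv` (with `u` the parent of `v`) is redundant if both endpoints are duplications
mapped to the same species. -/
def RedundantEdge (𝒢 : Recon Γ VG₁ VS S) (u v : VG₁) : Prop :=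
  IsChild 𝒢.tree v u ∧ 𝒢.μ u = 𝒢.μ v ∧ 𝒢.lbl u = Evt.dup ∧ 𝒢.lbl v = Evt.dup

/-- A reconciled gene tree is least duplication-resolved if it has no redundant edge. -/
def LeastDupResolved (𝒢 : Recon Γ VG₁ VS S) : Prop :=
  ∀ u v, ¬ RedundantEdge 𝒢 u v

/-- `𝒢'` is obtained from `𝒢` by contracting the edge `uv` (`u` the parent of `v`), i.e.
deleting `v` and attaching its children to `u`; `φ` is the corresponding quotient map. -/
def IsContractionOf (𝒢 : Recon Γ VG₁ VS S) (u v : VG₁) (𝒢' : Recon Γ VG₂ VS S)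
    (φ : VG₁ → VG₂) : Prop :=
  Function.Surjective φ ∧
  φ u = φ v ∧
  (∀ a b, φ a = φ b → a = b ∨ (a = u ∧ b = v) ∨ (a = v ∧ b = u)) ∧
  (∀ x y, 𝒢'.tree.adj.Adj x y ↔
    ∃ a b, φ a = x ∧ φ b = y ∧ 𝒢.tree.adj.Adj a b ∧ ¬(a = u ∧ b = v) ∧ ¬(a = v ∧ b = u)) ∧
  𝒢'.tree.root = φ 𝒢.tree.root ∧
  (∀ g, 𝒢'.geneLeaf g = φ (𝒢.geneLeaf g)) ∧
  (∀ a, 𝒢'.μ (φ a) = 𝒢.μ a) ∧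
  (∀ a, 𝒢'.lbl (φ a) = 𝒢.lbl a)

/-- Symmetrized redundancy relation on nodes. -/
def RedundantAdj (𝒢 : Recon Γ VG₁ VS S) (a b : VG₁) : Prop :=
  RedundantEdge 𝒢 a b ∨ RedundantEdge 𝒢 b a

/-- `𝒢'` is the least duplication-resolved tree `LR(𝒢)` obtained by contracting every
redundant edge of `𝒢`; `φ` is the corresponding quotient map. -/
def IsLROf (𝒢 : Recon Γ VG₁ VS S) (𝒢' : Recon Γ VG₂ VS S) (φ : VG₁ → VG₂) : Prop :=
  Function.Surjective φ ∧
  (∀ a b, φ a = φ b ↔ Relation.EqvGen (RedundantAdj 𝒢) a b) ∧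
  (∀ x y, 𝒢'.tree.adj.Adj x y ↔
    ∃ a b, φ a = x ∧ φ b = y ∧ 𝒢.tree.adj.Adj a b ∧ ¬ RedundantAdj 𝒢 a b) ∧
  𝒢'.tree.root = φ 𝒢.tree.root ∧
  (∀ g, 𝒢'.geneLeaf g = φ (𝒢.geneLeaf g)) ∧
  (∀ a, 𝒢'.μ (φ a) = 𝒢.μ a) ∧
  (∀ a, 𝒢'.lbl (φ a) = 𝒢.lbl a)

/-- Isomorphism of reconciled gene trees: a leaf-fixing bijection preserving edges,
species maps and event labels. -/
def ReconIso (𝒢₁ : Recon Γ VG₁ VS S) (𝒢₂ : Recon Γ VG₂ VS S) : Prop :=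
  ∃ φ : VG₁ ≃ VG₂,
    (∀ g, φ (𝒢₁.geneLeaf g) = 𝒢₂.geneLeaf g) ∧
    (∀ a b, 𝒢₂.tree.adj.Adj (φ a) (φ b) ↔ 𝒢₁.tree.adj.Adj a b) ∧
    (∀ v, 𝒢₂.μ (φ v) = 𝒢₁.μ v) ∧
    (∀ v, 𝒢₂.lbl (φ v) = 𝒢₁.lbl v)

/-- Exactly one gene per species: the gene set is the set of species leaves, and each gene
resides in its own species. -/
def OneGenePerSpecies (𝒢 : Recon {s : VS // IsLeaf S s} VG₁ VS S) : Prop :=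
  ∀ g, 𝒢.μ (𝒢.geneLeaf g) = g.1

/-! Suppose `v ≺ u` with `μ u = μ v` and `l u = l v`. The child `c` of `u` on the path to `v`
is squeezed by time-consistency to `μ c = μ u`. A speciation sends every strict descendant into
the subtree of a child of its species, so neither `u` nor (unless `c = v`) `c` is a speciation;
both are internal, hence duplications, and `uc` is a redundant edge. -/

theorem Anc.trans {T : RTree V} {a b c : V} (hab : Anc T a b) (hbc : Anc T b c) :
    Anc T a c := by
  have hconn := T.isTree.connected
  have := hconn.dist_triangle (u := a) (v := b) (w := c)
  have := hconn.dist_triangle (u := T.root) (v := a) (w := c)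
  unfold Anc at *
  omega

theorem Anc.antisymm {T : RTree V} {a b : V} (hab : Anc T a b) (hba : Anc T b a) : a = b := by
  apply T.isTree.connected.dist_eq_zero_iff.mp
  unfold Anc at *
  omega

/-- The first step of a shortest path from `u` down to `v` is a child of `u` lying above `v`. -/
theorem exists_isChild_anc_of_anc {T : RTree V} {u v : V} (h : Anc T u v) (hne : v ≠ u) :
    ∃ c, IsChild T c u ∧ Anc T c v := by
  have hconn := T.isTree.connected
  obtain ⟨p, hp⟩ := hconn.exists_walk_length_eq_dist u v
  cases p with
  | nil => exact absurd rfl hne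
  | @cons _ c _ hadj q =>
    have hq : T.adj.dist c v ≤ q.length := SimpleGraph.dist_le q
    have huc : T.adj.dist u c = 1 := SimpleGraph.dist_eq_one_iff_adj.mpr hadj
    have hlen : q.length + 1 = T.adj.dist u v := hp
    have := hconn.dist_triangle (u := u) (v := c) (w := v)
    have := hconn.dist_triangle (u := T.root) (v := u) (w := c)
    have := hconn.dist_triangle (u := T.root) (v := c) (w := v)
    refine ⟨c, ⟨hadj.symm, ?_⟩, ?_⟩ <;> unfold Anc at * <;> omega

namespace Recon

variable (𝒢 : Recon Γ VG₁ VS S)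

theorem exists_isChild_anc_mu_of_spec {u c : VG₁} (hu : 𝒢.lbl u = Evt.spec)
    (hc : IsChild 𝒢.tree c u) : ∃ s, IsChild S s (𝒢.μ u) ∧ Anc S s (𝒢.μ c) := by
  obtain ⟨a, b, hab, hchildren⟩ := Set.ncard_eq_two.mp (𝒢.spec_two_children u hu).2
  have hmem : ∀ x, IsChild 𝒢.tree x u ↔ x = a ∨ x = b := fun x => by
    change x ∈ childSet 𝒢.tree u ↔ _
    rw [hchildren]
    rfl
  obtain ⟨d, hd, hcd⟩ : ∃ d, IsChild 𝒢.tree d u ∧ c ≠ d := by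
    rcases (hmem c).mp hc with rfl | rfl
    · exact ⟨b, (hmem b).mpr (Or.inr rfl), hab⟩
    · exact ⟨a, (hmem a).mpr (Or.inl rfl), hab.symm⟩
  obtain ⟨s₁, s₂, hs₁, hs₂, -, ⟨h₁, -⟩ | ⟨h₂, -⟩⟩ := 𝒢.spec_separates u hu c d hc hd hcd
  exacts [⟨s₁, hs₁, h₁⟩, ⟨s₂, hs₂, h₂⟩]

/-- A speciation maps every strict descendant strictly below its own species. -/
theorem lbl_eq_dup_of_anc_of_mu_eq {u v : VG₁} (hanc : Anc 𝒢.tree u v) (hne : v ≠ u)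
    (hμ : 𝒢.μ u = 𝒢.μ v) : 𝒢.lbl u = Evt.dup := by
  obtain ⟨c, hc, hcv⟩ := exists_isChild_anc_of_anc hanc hne
  refine (𝒢.internal_lbl u fun hleaf => hleaf c hc).resolve_right fun hspec => ?_
  obtain ⟨s, hs, hsc⟩ := 𝒢.exists_isChild_anc_mu_of_spec hspec hc
  have hsu : Anc S s (𝒢.μ u) := hμ ▸ hsc.trans (𝒢.time_consistent c v hcv)
  exact hs.1.ne (hsu.antisymm hs.2)

end Recon

theorem stmt0_general (𝒢 : Recon Γ VG₁ VS S)
    (hldr : LeastDupResolved 𝒢) (u v : VG₁)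
    (hanc : Anc 𝒢.tree u v) (hne : v ≠ u) :
    𝒢.μ u ≠ 𝒢.μ v ∨ 𝒢.lbl u ≠ 𝒢.lbl v := by
  by_contra! ⟨hμ, hlbl⟩
  obtain ⟨c, hc, hcv⟩ := exists_isChild_anc_of_anc hanc hne
  have hμc : 𝒢.μ u = 𝒢.μ c :=
    (𝒢.time_consistent u c hc.2).antisymm (hμ ▸ 𝒢.time_consistent c v hcv)
  have hlu : 𝒢.lbl u = Evt.dup := 𝒢.lbl_eq_dup_of_anc_of_mu_eq hanc hne hμ
  have hlc : 𝒢.lbl c = Evt.dup := by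
    by_cases hcv' : c = v
    · rw [hcv', ← hlbl, hlu]
    · exact 𝒢.lbl_eq_dup_of_anc_of_mu_eq hcv (Ne.symm hcv') (hμc ▸ hμ)
  exact hldr u c ⟨hc, hμc, hlu, hlc⟩

/-- In a least duplication-resolved reconciled gene tree, any strict
ancestor-descendant pair differs in species map or in event label. -/
theorem stmt0 (hS : IsSpeciesTree S) (𝒢 : Recon Γ VG₁ VS S)
    (hldr : LeastDupResolved 𝒢) (u v : VG₁)
    (hanc : Anc 𝒢.tree u v) (hne : v ≠ u) :
    𝒢.μ u ≠ 𝒢.μ v ∨ 𝒢.lbl u ≠ 𝒢.lbl v :=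
  stmt0_general 𝒢 hldr u v hanc hne
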